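/- Let X be a non-separable, reflexive complex Banach space with few operators, i.e. every bounded linear operator T : X → X can be written as T = α·id_X + S with α ∈ ℂ and S a bounded operator with separable range, and let E = X'. Then there exists a left ideal I of B(E) that is closed in the weak operator topology but is not the WOT-closure of any finitely generated left ideal: for every n ∈ ℕ and all T_1, …, T_n ∈ I, the closure of B(E)T_1 + ⋯ + B(E)T_n in the weak operator topology is a proper subset of I. (One may take I = { T ∈ B(E) : T x = 0 for all x ∈ D } for a suitable closed subspace D of E.) -/

import Mathlib

/-!
By Zorn's lemma, reflexivity and non-separability give an uncountable biorthogonal system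
`(x_p, f_p)_{p ∈ P}` in `X × X'`. Split `P` into uncountable parts `A` and `P \ A` and let `I`
consist of the operators on `X'` killing every functional that vanishes on all `x_p`, `p ∈ A`;
such a set of operators is a WOT-closed left ideal.

By reflexivity every `T ∈ I` is the adjoint of some `α + R` with `R` of separable range. As `T`
kills the uncountably many `f_p`, `p ∉ A`, the vectors `R x_p` satisfy `f_q (R x_p) = -α δ_pq`,
so they would be uniformly separated in a separable set unless `α = 0`; thus `T g = g ∘ R`.
Given `T_1, …, T_n ∈ I`, the non-separable set `{x_p : p ∈ A}` leaves the closed span of the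
ranges of the `R_i`, so some `x_p` and `f` with `f x_p = 1` and `f ∘ R_i = 0` exist. Every
operator in the WOT-closure of `∑ B(X') T_i` kills `f`, but the rank-one operator
`g ↦ g(x_p) f` of `I` does not.
-/

open NormedSpace TopologicalSpace

theorem Metric.IsSeparated.countable_of_isSeparable {X : Type*} [PseudoEMetricSpace X]
    {ε : ENNReal} {s : Set X} (hε : ε ≠ 0) (hs : Metric.IsSeparated ε s) (hsep : IsSeparable s) :
    s.Countable := by
  obtain ⟨c, hc, hsc⟩ := hsep
  have hnear : ∀ x ∈ s, ∃ y ∈ c, edist x y < ε / 2 := fun x hx =>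
    EMetric.mem_closure_iff.1 (hsc hx) _ (ENNReal.half_pos hε)
  choose! φ hφc hφ using hnear
  refine Set.MapsTo.countable_of_injOn (f := φ) hφc (fun x hx y hy hxy => ?_) hc
  by_contra hne
  refine lt_irrefl ε (calc ε < edist x y := hs hx hy hne
    _ ≤ edist x (φ x) + edist y (φ y) := by rw [hxy]; exact edist_triangle_right _ _ _
    _ < ε / 2 + ε / 2 := ENNReal.add_lt_add (hφ x hx) (hφ y hy)
    _ = ε := ENNReal.add_halves ε)

theorem Set.exists_subset_not_countable_diff {α : Type*} {s : Set α} (hs : ¬ s.Countable) :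
    ∃ t ⊆ s, ¬ t.Countable ∧ ¬ (s \ t).Countable := by
  have : Infinite s := Set.infinite_coe_iff.2 fun h => hs h.countable
  obtain ⟨e⟩ : Nonempty (s ⊕ s ≃ s) := by
    rw [← Cardinal.eq, Cardinal.mk_sum, Cardinal.lift_id, Cardinal.add_eq_self
      (Cardinal.aleph0_le_mk s)]
  have hrange : ∀ g : s → s, Function.Injective g → ¬ (Subtype.val '' Set.range g).Countable :=
    fun g hg hcount => hs <| Set.countable_coe_iff.1 <| Set.countable_univ_iff.1 <|
      Set.countable_of_injective_of_countable_image (Subtype.val_injective.comp hg).injOn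
        (by rwa [← Set.range_comp, ← Set.image_univ] at hcount)
  refine ⟨Subtype.val '' Set.range (e ∘ Sum.inl), by simp,
    hrange _ (e.injective.comp Sum.inl_injective),
    fun h => hrange _ (e.injective.comp Sum.inr_injective) (h.mono ?_)⟩
  rintro _ ⟨_, ⟨x, rfl⟩, rfl⟩
  refine ⟨(e (Sum.inr x)).2, ?_⟩
  rintro ⟨_, ⟨y, hy⟩, hxy⟩
  exact Sum.inl_ne_inr (e.injective (Subtype.val_injective (hy ▸ hxy)))

theorem eq_zero_of_mem_closure_of_norm_le_mul {E : Type*} [NormedAddCommGroup E] {s : Set E}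
    {x : E} {K : ℝ} (hx : x ∈ closure s) (h : ∀ y ∈ s, ‖x‖ ≤ K * ‖x - y‖) : x = 0 := by
  have hclosed : IsClosed {y | ‖x‖ ≤ K * ‖x - y‖} :=
    isClosed_le continuous_const (continuous_const.mul (continuous_const.sub continuous_id).norm)
  have : x ∈ {y | ‖x‖ ≤ K * ‖x - y‖} := closure_minimal h hclosed hx
  simpa using this

section RCLike

variable {𝕜 E F G : Type*} [RCLike 𝕜] [NormedAddCommGroup E] [NormedSpace 𝕜 E]
  [NormedAddCommGroup F] [NormedSpace 𝕜 F] [NormedAddCommGroup G] [NormedSpace 𝕜 G]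

theorem Submodule.exists_dual_eq_one_of_notMem {M : Submodule 𝕜 E} (hM : IsClosed (M : Set E))
    {x : E} (hx : x ∉ M) : ∃ f : StrongDual 𝕜 E, (∀ y ∈ M, f y = 0) ∧ f x = 1 := by
  have := hM
  obtain ⟨g, hg⟩ := SeparatingDual.exists_eq_one (R := 𝕜) (x := M.mkQ x)
    (by rwa [Submodule.mkQ_apply, ne_eq, Submodule.Quotient.mk_eq_zero])
  refine ⟨g.comp M.mkQL, fun y hy => ?_, hg⟩
  rw [ContinuousLinearMap.comp_apply, Submodule.mkQL_apply, Submodule.mkQ_apply,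
    (Submodule.Quotient.mk_eq_zero M).2 hy, map_zero]

theorem TopologicalSpace.IsSeparable.topologicalClosure_span {s : Set E} (hs : IsSeparable s) :
    IsSeparable ((Submodule.span 𝕜 s).topologicalClosure : Set E) := by
  rw [Submodule.topologicalClosure_coe]
  exact hs.span.closure

theorem ContinuousLinearMap.exists_norm_le_one_norm_le_two_mul (g : E →L[𝕜] F) :
    ∃ x : E, ‖x‖ ≤ 1 ∧ ‖g‖ ≤ 2 * ‖g x‖ := by
  by_cases hg : g = 0
  · exact ⟨0, by simp [hg]⟩
  obtain ⟨x, hx1, hx2⟩ := g.exists_lt_apply_of_lt_opNorm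
    (half_lt_self (norm_pos_iff.2 hg))
  exact ⟨x, hx1.le, by linarith⟩

theorem separableSpace_of_separableSpace_strongDual [SeparableSpace (StrongDual 𝕜 E)] :
    SeparableSpace E := by
  obtain ⟨u, hu⟩ := exists_dense_seq (StrongDual 𝕜 E)
  choose x hx1 hx2 using fun n => (u n).exists_norm_le_one_norm_le_two_mul
  set S := Submodule.span 𝕜 (Set.range x)
  suffices hM : ∀ y, y ∈ S.topologicalClosure from isSeparable_univ_iff.1 <|
    (Set.countable_range x).isSeparable.topologicalClosure_span.mono fun y _ => hM y
  intro y
  by_contra hy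
  obtain ⟨f, hf, hfy⟩ := Submodule.exists_dual_eq_one_of_notMem S.isClosed_topologicalClosure hy
  have hf0 : f = 0 := by
    refine eq_zero_of_mem_closure_of_norm_le_mul (K := 3) (hu.closure_eq ▸ Set.mem_univ f) ?_
    rintro _ ⟨n, rfl⟩
    have hfx : f (x n) = 0 :=
      hf _ (S.le_topologicalClosure (Submodule.subset_span (Set.mem_range_self n)))
    have hun : ‖u n‖ ≤ 2 * ‖f - u n‖ := calc
      ‖u n‖ ≤ 2 * ‖(f - u n) (x n)‖ := by simpa [hfx] using hx2 n
      _ ≤ 2 * ‖f - u n‖ := by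
        gcongr
        exact (f - u n).le_of_opNorm_le_of_le le_rfl (hx1 n) |>.trans_eq (mul_one _)
    calc ‖f‖ ≤ ‖u n‖ + ‖f - u n‖ := norm_le_insert' _ _
      _ ≤ 3 * ‖f - u n‖ := by linarith
  simp [hf0] at hfy

theorem not_isSeparable_image_of_biorthogonal {ι : Type*} {v : ι → E} {f : ι → StrongDual 𝕜 E}
    {s : Set ι} (hs : ¬ s.Countable) {c : 𝕜} (hc : c ≠ 0) (hdiag : ∀ i ∈ s, f i (v i) = c)
    (hoff : ∀ i ∈ s, ∀ j ∈ s, i ≠ j → f i (v j) = 0) : ¬ IsSeparable (v '' s) := by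
  obtain ⟨n, hn⟩ : ∃ n : ℕ, ¬ {i ∈ s | ‖f i‖ ≤ n}.Countable := by
    by_contra! hall
    refine hs ((Set.countable_iUnion hall).mono fun i hi => ?_)
    exact Set.mem_iUnion.2 ⟨⌈‖f i‖⌉₊, hi, Nat.le_ceil _⟩
  set t := {i ∈ s | ‖f i‖ ≤ n}
  have hdist : ∀ i ∈ t, ∀ j ∈ t, i ≠ j → ‖c‖ ≤ n * dist (v i) (v j) := by
    intro i hi j hj hij
    calc ‖c‖ = ‖f i (v i - v j)‖ := by
          rw [map_sub, hdiag i hi.1, hoff i hi.1 j hj.1 hij, sub_zero]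
      _ ≤ ‖f i‖ * ‖v i - v j‖ := (f i).le_opNorm _
      _ ≤ n * dist (v i) (v j) := by rw [dist_eq_norm]; gcongr; exact hi.2
  have hpos : ∀ i ∈ t, ∀ j ∈ t, i ≠ j → 0 < dist (v i) (v j) := fun i hi j hj hij =>
    dist_nonneg.lt_of_ne fun h0 =>
      hc (norm_le_zero_iff.1 (by simpa [← h0] using hdist i hi j hj hij))
  have hinj : Set.InjOn v t := fun i hi j hj hij => by
    by_contra hne
    simpa [hij] using hpos i hi j hj hne
  intro hsep
  refine hn (Set.countable_of_injective_of_countable_image hinj ?_)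
  refine Metric.IsSeparated.countable_of_isSeparable (ε := ENNReal.ofReal (‖c‖ / (n + 1)))
    (ENNReal.ofReal_pos.2 (div_pos (norm_pos_iff.2 hc) (by positivity))).ne' ?_
    (hsep.mono (Set.image_mono fun i hi => hi.1))
  rintro _ ⟨i, hi, rfl⟩ _ ⟨j, hj, rfl⟩ hne
  have hij : i ≠ j := fun h => hne (h ▸ rfl)
  rw [edist_dist, ENNReal.ofReal_lt_ofReal_iff (hpos i hi j hj hij),
    div_lt_iff₀ (by positivity)]
  nlinarith [hdist i hi j hj hij, hpos i hi j hj hij]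

theorem exists_ne_zero_forall_apply_eq_zero (hE : ¬ SeparableSpace E)
    (hrefl : Function.Surjective (inclusionInDoubleDual 𝕜 E)) {G : Set (StrongDual 𝕜 E)}
    (hG : G.Countable) : ∃ x ≠ 0, ∀ g ∈ G, g x = 0 := by
  set H := Submodule.span 𝕜 G
  obtain ⟨h, hh⟩ : ∃ h, h ∉ H.topologicalClosure := by
    by_contra! hall
    have : SeparableSpace (StrongDual 𝕜 E) :=
      isSeparable_univ_iff.1 (hG.isSeparable.topologicalClosure_span.mono fun h _ => hall h)
    exact hE (separableSpace_of_separableSpace_strongDual (𝕜 := 𝕜))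
  obtain ⟨Φ, hΦ, hΦh⟩ := Submodule.exists_dual_eq_one_of_notMem H.isClosed_topologicalClosure hh
  obtain ⟨x, rfl⟩ := hrefl Φ
  refine ⟨x, ?_, fun g hg => hΦ g (H.le_topologicalClosure (Submodule.subset_span hg))⟩
  rintro rfl
  simp at hΦh

theorem exists_notMem_forall_apply_eq_zero (hE : ¬ SeparableSpace E)
    (hrefl : Function.Surjective (inclusionInDoubleDual 𝕜 E)) {s : Set E} (hs : IsSeparable s)
    {G : Set (StrongDual 𝕜 E)} (hG : G.Countable) : ∃ x ∉ s, ∀ g ∈ G, g x = 0 := by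
  obtain ⟨c, hc, hsc⟩ := hs
  -- Adding norming functionals of the points of `c` to `G` keeps `x` out of `closure c ⊇ s`.
  choose φ hφ hφy using exists_dual_vector'' 𝕜 (E := E)
  obtain ⟨x, hx0, hx⟩ := exists_ne_zero_forall_apply_eq_zero hE hrefl (hG.union (hc.image φ))
  refine ⟨x, fun hxs => hx0 ?_, fun g hg => hx g (Or.inl hg)⟩
  refine eq_zero_of_mem_closure_of_norm_le_mul (K := 2) (hsc hxs) fun y hy => ?_
  have hyx : ‖y‖ ≤ ‖x - y‖ := calc
    ‖y‖ = ‖φ y (y - x)‖ := by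
      rw [map_sub, hx _ (Or.inr ⟨y, hy, rfl⟩), sub_zero, hφy, RCLike.norm_ofReal, abs_norm]
    _ ≤ ‖x - y‖ := by
      rw [norm_sub_rev]
      exact (φ y).le_of_opNorm_le_of_le (hφ y) le_rfl |>.trans_eq (one_mul _)
  calc ‖x‖ ≤ ‖y‖ + ‖x - y‖ := norm_le_insert' _ _
    _ ≤ 2 * ‖x - y‖ := by linarith

theorem exists_not_countable_biorthogonal (hE : ¬ SeparableSpace E)
    (hrefl : Function.Surjective (inclusionInDoubleDual 𝕜 E)) :
    ∃ P : Set (E × StrongDual 𝕜 E), ¬ P.Countable ∧ (∀ p ∈ P, p.2 p.1 = 1) ∧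
      ∀ p ∈ P, ∀ q ∈ P, p ≠ q → p.2 q.1 = 0 := by
  set S := {P : Set (E × StrongDual 𝕜 E) |
    (∀ p ∈ P, p.2 p.1 = 1) ∧ ∀ p ∈ P, ∀ q ∈ P, p ≠ q → p.2 q.1 = 0}
  have hchain : ∀ C ⊆ S, IsChain (· ⊆ ·) C → ∃ P ∈ S, ∀ Q ∈ C, Q ⊆ P := by
    refine fun C hCS hC => ⟨⋃₀ C, ⟨?_, ?_⟩, fun _ => Set.subset_sUnion_of_mem⟩
    · rintro p ⟨Q, hQ, hpQ⟩
      exact (hCS hQ).1 p hpQ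
    · rintro p ⟨Q, hQ, hpQ⟩ q ⟨Q', hQ', hqQ'⟩
      rcases hC.total hQ hQ' with h | h
      · exact (hCS hQ').2 p (h hpQ) q hqQ'
      · exact (hCS hQ).2 p hpQ q (h hqQ')
  obtain ⟨P, hP⟩ := zorn_subset S hchain
  refine ⟨P, fun hPc => ?_, hP.prop⟩
  set M := Submodule.span 𝕜 (Prod.fst '' P)
  have hMsep : IsSeparable (M.topologicalClosure : Set E) :=
    (hPc.image Prod.fst).isSeparable.topologicalClosure_span
  obtain ⟨x, hxM, hx⟩ := exists_notMem_forall_apply_eq_zero hE hrefl hMsep (hPc.image Prod.snd)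
  obtain ⟨f, hf, hfx⟩ := Submodule.exists_dual_eq_one_of_notMem M.isClosed_topologicalClosure hxM
  have hfst : ∀ q ∈ P, q.1 ∈ M.topologicalClosure := fun q hq =>
    M.le_topologicalClosure (Submodule.subset_span ⟨q, hq, rfl⟩)
  have hxP : (x, f) ∉ P := fun h => hxM (hfst _ h)
  have hins : insert (x, f) P ∈ S := by
    refine ⟨?_, ?_⟩
    · rintro p (rfl | hp)
      exacts [hfx, hP.prop.1 p hp]
    · rintro p (rfl | hp) q (rfl | hq) hpq
      exacts [absurd rfl hpq, hf _ (hfst q hq), hx _ ⟨p, hp, rfl⟩, hP.prop.2 p hp q hq hpq]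
  exact hxP ((hP.eq_of_subset hins (Set.subset_insert _ _)) ▸ Set.mem_insert _ _)

theorem exists_preadjoint (hrefl : Function.Surjective (inclusionInDoubleDual 𝕜 E))
    (T : StrongDual 𝕜 E →L[𝕜] StrongDual 𝕜 E) : ∃ S : E →L[𝕜] E, ∀ g, T g = g ∘L S := by
  let κ := LinearIsometryEquiv.ofSurjective (inclusionInDoubleDualLi 𝕜) hrefl
  refine ⟨(κ.symm : StrongDual 𝕜 (StrongDual 𝕜 E) →L[𝕜] E) ∘L
    ContinuousLinearMap.precomp 𝕜 T ∘L (κ : E →L[𝕜] StrongDual 𝕜 (StrongDual 𝕜 E)), fun g => ?_⟩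
  ext x
  exact (congrArg (· g) (κ.apply_symm_apply ((κ x).comp T))).symm

theorem eq_zero_of_forall_comp_smul_id_add_eq_zero {ι : Type*} {x : ι → E}
    {f : ι → StrongDual 𝕜 E} {s : Set ι} (hs : ¬ s.Countable) (hdiag : ∀ i ∈ s, f i (x i) = 1)
    (hoff : ∀ i ∈ s, ∀ j ∈ s, i ≠ j → f i (x j) = 0) {a : 𝕜} {R : E →L[𝕜] E}
    (hR : IsSeparable (Set.range R))
    (hf : ∀ i ∈ s, f i ∘L (a • ContinuousLinearMap.id 𝕜 E + R) = 0) : a = 0 := by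
  have hfR : ∀ i ∈ s, ∀ j, a * f i (x j) + f i (R (x j)) = 0 := fun i hi j => by
    simpa using congrArg (· (x j)) (hf i hi)
  by_contra ha
  refine not_isSeparable_image_of_biorthogonal (v := R ∘ x) (f := f) hs (neg_ne_zero.2 ha)
    (fun i hi => ?_) (fun i hi j hj hij => ?_) (hR.mono fun _ ⟨j, _, hj⟩ => ⟨x j, hj⟩)
  · show f i (R (x i)) = -a
    linear_combination (by simpa [hdiag i hi] using hfR i hi i : a + f i (R (x i)) = 0)
  · simpa [hoff i hi j hj hij] using hfR i hi j

theorem exists_isSeparable_range_preadjoint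
    (hrefl : Function.Surjective (inclusionInDoubleDual 𝕜 E))
    (hfew : ∀ S : E →L[𝕜] E, ∃ (α : 𝕜) (R : E →L[𝕜] E),
      S = α • ContinuousLinearMap.id 𝕜 E + R ∧ IsSeparable (Set.range R))
    {ι : Type*} {x : ι → E} {f : ι → StrongDual 𝕜 E} {s : Set ι} (hs : ¬ s.Countable)
    (hdiag : ∀ i ∈ s, f i (x i) = 1) (hoff : ∀ i ∈ s, ∀ j ∈ s, i ≠ j → f i (x j) = 0)
    {T : StrongDual 𝕜 E →L[𝕜] StrongDual 𝕜 E} (hT : ∀ i ∈ s, T (f i) = 0) :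
    ∃ R : E →L[𝕜] E, IsSeparable (Set.range R) ∧ ∀ g, T g = g ∘L R := by
  obtain ⟨S, hS⟩ := exists_preadjoint hrefl T
  obtain ⟨a, R, rfl, hR⟩ := hfew S
  obtain rfl : a = 0 := eq_zero_of_forall_comp_smul_id_add_eq_zero hs hdiag hoff hR fun i hi =>
    (hS (f i)).symm.trans (hT i hi)
  exact ⟨R, hR, fun g => by simpa using hS g⟩

theorem exists_dual_eq_one_forall_comp_eq_zero {ι : Type*} [Countable ι] {R : ι → E →L[𝕜] E}
    (hR : ∀ i, IsSeparable (Set.range (R i))) {t : Set E} (ht : ¬ IsSeparable t) :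
    ∃ y ∈ t, ∃ f : StrongDual 𝕜 E, f y = 1 ∧ ∀ i, f ∘L R i = 0 := by
  set V := Submodule.span 𝕜 (⋃ i, Set.range (R i))
  obtain ⟨y, hyt, hyV⟩ : ∃ y ∈ t, y ∉ V.topologicalClosure := by
    by_contra! h
    exact ht ((IsSeparable.iUnion hR).topologicalClosure_span.mono h)
  obtain ⟨f, hf, hfy⟩ := Submodule.exists_dual_eq_one_of_notMem V.isClosed_topologicalClosure hyV
  refine ⟨y, hyt, f, hfy, fun i => ?_⟩
  ext x
  exact hf _ (V.le_topologicalClosure (Submodule.subset_span (Set.mem_iUnion.2 ⟨i, x, rfl⟩)))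

variable (𝕜 F) in
def vanishingOperators (D : Set E) : Submodule 𝕜 (E →L[𝕜] F) where
  carrier := {T | ∀ x ∈ D, T x = 0}
  add_mem' hS hT x hx := by simp [hS x hx, hT x hx]
  zero_mem' _ _ := rfl
  smul_mem' c T hT x hx := by simp [hT x hx]

@[simp]
theorem mem_vanishingOperators {D : Set E} {T : E →L[𝕜] F} :
    T ∈ vanishingOperators 𝕜 F D ↔ ∀ x ∈ D, T x = 0 :=
  Iff.rfl

theorem comp_mem_vanishingOperators {D : Set E} (S : F →L[𝕜] G) {T : E →L[𝕜] F}
    (hT : T ∈ vanishingOperators 𝕜 F D) : S ∘L T ∈ vanishingOperators 𝕜 G D := fun x hx => by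
  simp [(mem_vanishingOperators.1 hT) x hx]

theorem isClosed_image_ofCLM_vanishingOperators (D : Set E) :
    IsClosed (ContinuousLinearMapWOT.ofCLM '' (vanishingOperators 𝕜 F D : Set (E →L[𝕜] F))) := by
  have hD : ContinuousLinearMapWOT.ofCLM '' (vanishingOperators 𝕜 F D : Set (E →L[𝕜] F)) =
      ⋂ x ∈ D, ⋂ y : StrongDual 𝕜 F, {W | y (W x) = 0} := by
    ext W
    simp only [Set.mem_iInter, Set.mem_ofPred_eq, ← SeparatingDual.eq_zero_iff_forall_dual_eq_zero]
    exact ⟨by rintro ⟨T, hT, rfl⟩; exact hT, fun hW => ⟨W.toCLM, hW, rfl⟩⟩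
  rw [hD]
  exact isClosed_biInter fun x _ => isClosed_iInter fun y =>
    isClosed_eq (ContinuousLinearMapWOT.continuous_dual_apply x y) continuous_const

theorem preimage_closure_leftSpan_subset_vanishingOperators {n : ℕ} {T : Fin n → E →L[𝕜] F}
    {D : Set E} (hT : ∀ i, T i ∈ vanishingOperators 𝕜 F D) :
    ContinuousLinearMapWOT.ofCLM ⁻¹' closure (ContinuousLinearMapWOT.ofCLM ''
      {W : E →L[𝕜] G | ∃ A : Fin n → F →L[𝕜] G, W = ∑ i, A i ∘L T i}) ⊆
      vanishingOperators 𝕜 G D := by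
  intro W hW
  refine ContinuousLinearMapWOT.ofCLM_injective.mem_set_image.1 <|
    closure_minimal (Set.image_mono ?_) (isClosed_image_ofCLM_vanishingOperators D) hW
  rintro _ ⟨A, rfl⟩
  exact Submodule.sum_mem _ fun i _ => comp_mem_vanishingOperators (A i) (hT i)

end RCLike

theorem exists_WOT_closed_left_ideal_not_finitely_generated_general
    (X : Type*) [NormedAddCommGroup X] [NormedSpace ℂ X]
    (hnonsep : ¬ SeparableSpace X)
    (hrefl : Function.Surjective (inclusionInDoubleDual ℂ X))
    (hfew : ∀ T : X →L[ℂ] X, ∃ (α : ℂ) (S : X →L[ℂ] X),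
      T = α • ContinuousLinearMap.id ℂ X + S ∧ IsSeparable (Set.range S)) :
    ∃ I : Submodule ℂ (StrongDual ℂ X →L[ℂ] StrongDual ℂ X),
      (∀ S : StrongDual ℂ X →L[ℂ] StrongDual ℂ X, ∀ T ∈ I, S ∘L T ∈ I) ∧
      IsClosed ((ContinuousLinearMapWOT.ofCLM : (StrongDual ℂ X →L[ℂ] StrongDual ℂ X) → (StrongDual ℂ X →WOT[ℂ] StrongDual ℂ X)) '' (I : Set _) :
        Set ((StrongDual ℂ X) →WOT[ℂ] (StrongDual ℂ X))) ∧
      (∀ (n : ℕ), 0 < n → ∀ T : Fin n → (StrongDual ℂ X →L[ℂ] StrongDual ℂ X), (∀ i, T i ∈ I) →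
        (ContinuousLinearMapWOT.ofCLM : (StrongDual ℂ X →L[ℂ] StrongDual ℂ X) → (StrongDual ℂ X →WOT[ℂ] StrongDual ℂ X)) ⁻¹'
            closure ((ContinuousLinearMapWOT.ofCLM : (StrongDual ℂ X →L[ℂ] StrongDual ℂ X) → (StrongDual ℂ X →WOT[ℂ] StrongDual ℂ X)) ''
              {W : StrongDual ℂ X →L[ℂ] StrongDual ℂ X |
                ∃ A : Fin n → (StrongDual ℂ X →L[ℂ] StrongDual ℂ X), W = ∑ i, A i ∘L T i})
          ⊂ (I : Set (StrongDual ℂ X →L[ℂ] StrongDual ℂ X))) := by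
  obtain ⟨P, hP, hdiag, hoff⟩ := exists_not_countable_biorthogonal hnonsep hrefl
  obtain ⟨A, hAP, hA, hB⟩ := Set.exists_subset_not_countable_diff hP
  set D := {g : StrongDual ℂ X | ∀ p ∈ A, g p.1 = 0}
  refine ⟨vanishingOperators ℂ (StrongDual ℂ X) D, fun S T hT => comp_mem_vanishingOperators S hT,
    isClosed_image_ofCLM_vanishingOperators D, fun n _ T hT => ?_⟩
  have hBD : ∀ p ∈ P \ A, p.2 ∈ D := fun p hp q hq =>
    hoff p hp.1 q (hAP hq) (ne_of_mem_of_not_mem hq hp.2).symm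
  choose R hRsep hTR using fun i => exists_isSeparable_range_preadjoint hrefl hfew hB
    (fun p hp => hdiag p hp.1) (fun p hp q hq => hoff p hp.1 q hq.1)
    fun p hp => hT i p.2 (hBD p hp)
  obtain ⟨_, ⟨p, hpA, rfl⟩, f, hfp, hfR⟩ := exists_dual_eq_one_forall_comp_eq_zero hRsep
    (not_isSeparable_image_of_biorthogonal hA one_ne_zero (fun p hp => hdiag p (hAP hp))
      fun p hp q hq => hoff p (hAP hp) q (hAP hq))
  have hTf : ∀ i, T i ∈ vanishingOperators ℂ (StrongDual ℂ X) {f} := by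
    rintro i _ rfl
    rw [hTR, hfR]
  refine ⟨preimage_closure_leftSpan_subset_vanishingOperators hT, fun h => ?_⟩
  have hmem : (inclusionInDoubleDual ℂ X p.1).smulRight f ∈
      vanishingOperators ℂ (StrongDual ℂ X) D := fun g hg => by simp [hg p hpA]
  have hf0 : f p.1 • f = 0 :=
    preimage_closure_leftSpan_subset_vanishingOperators hTf (h hmem) f rfl
  rw [hfp, one_smul] at hf0
  simp [hf0] at hfp

/-- **Theorem 2.5.13.** Let `X` be a non-separable, reflexive complex Banach space with few
operators, and let `E = X'`. Then there is a left ideal `I` of `B(E)`, closed in the weak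
operator topology, which is not the WOT-closure of any finitely generated left ideal: for all
`T_1, …, T_n ∈ I`, the WOT-closure of `B(E)T_1 + ⋯ + B(E)T_n` is a proper subset of `I`.
(Hence the dual Banach algebra `B(E)` is not weak*-topologically left Noetherian.) -/
theorem exists_WOT_closed_left_ideal_not_finitely_generated
    (X : Type*) [NormedAddCommGroup X] [NormedSpace ℂ X] [CompleteSpace X]
    (hnonsep : ¬ SeparableSpace X)
    (hrefl : Function.Surjective (inclusionInDoubleDual ℂ X))
    (hfew : ∀ T : X →L[ℂ] X, ∃ (α : ℂ) (S : X →L[ℂ] X),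
      T = α • ContinuousLinearMap.id ℂ X + S ∧ IsSeparable (Set.range S)) :
    ∃ I : Submodule ℂ (StrongDual ℂ X →L[ℂ] StrongDual ℂ X),
      (∀ S : StrongDual ℂ X →L[ℂ] StrongDual ℂ X, ∀ T ∈ I, S ∘L T ∈ I) ∧
      IsClosed ((ContinuousLinearMapWOT.ofCLM : (StrongDual ℂ X →L[ℂ] StrongDual ℂ X) → (StrongDual ℂ X →WOT[ℂ] StrongDual ℂ X)) '' (I : Set _) :
        Set ((StrongDual ℂ X) →WOT[ℂ] (StrongDual ℂ X))) ∧
      (∀ (n : ℕ), 0 < n → ∀ T : Fin n → (StrongDual ℂ X →L[ℂ] StrongDual ℂ X), (∀ i, T i ∈ I) →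
        (ContinuousLinearMapWOT.ofCLM : (StrongDual ℂ X →L[ℂ] StrongDual ℂ X) → (StrongDual ℂ X →WOT[ℂ] StrongDual ℂ X)) ⁻¹'
            closure ((ContinuousLinearMapWOT.ofCLM : (StrongDual ℂ X →L[ℂ] StrongDual ℂ X) → (StrongDual ℂ X →WOT[ℂ] StrongDual ℂ X)) ''
              {W : StrongDual ℂ X →L[ℂ] StrongDual ℂ X |
                ∃ A : Fin n → (StrongDual ℂ X →L[ℂ] StrongDual ℂ X), W = ∑ i, A i ∘L T i})
          ⊂ (I : Set (StrongDual ℂ X →L[ℂ] StrongDual ℂ X))) :=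
  exists_WOT_closed_left_ideal_not_finitely_generated_general X hnonsep hrefl hfew
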